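/- Let V ≥ 1, K ≥ 1, and α ∈ (0, 1). Let Z, S₁, …, S_K be independent random vectors, each distributed according to the centered isotropic standard Gaussian on EuclideanSpace ℝ (Fin V) (the product over coordinates of the real Gaussian measure with mean 0 and variance 1). Let w be a unit vector, set σ_eff = √(1 + 1/K), and let τ_α ∈ ℝ satisfy cdf(gaussianReal 0 1)(τ_α) = 1 − α. Define the standardized RSR statistic under drift d ∈ EuclideanSpace ℝ (Fin V) as Z_RSR(d) = ⟪(Z + d) − (1/K)·∑_{k=1}^{K} (S_k + d), w⟫ / σ_eff. Then for every d, ℙ(Z_RSR(d) > τ_α) = α; in particular, sup over all d ∈ EuclideanSpace ℝ (Fin V) of ℙ(Z_RSR(d) > τ_α) ≤ α. -/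

import Mathlib

open MeasureTheory ProbabilityTheory NNReal

/-- The centered isotropic standard Gaussian `N(0, I)` on `ℝ^V`: the product over
coordinates of the real Gaussian measure with mean `0` and variance `1`, viewed
as a measure on `EuclideanSpace ℝ (Fin V)`. -/
noncomputable def stdIsoGaussian (V : ℕ) : Measure (EuclideanSpace ℝ (Fin V)) :=
  (Measure.pi fun _ : Fin V => gaussianReal 0 1).map
    (MeasurableEquiv.toLp 2 (Fin V → ℝ))


namespace RSRAux

open Real

lemma pdf_conv_identity (va vb : ℝ≥0) (hva : va ≠ 0) (hvb : vb ≠ 0) (x t : ℝ) :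
    gaussianPDFReal 0 va x * gaussianPDFReal x vb t
      = gaussianPDFReal 0 (va + vb) t
        * gaussianPDFReal (((va : ℝ) / ((va : ℝ) + vb)) * t) (va * vb / (va + vb)) x := by
  have ha : (0:ℝ) < va := lt_of_le_of_ne (va.coe_nonneg) (by exact_mod_cast (Ne.symm hva))
  have hb : (0:ℝ) < vb := lt_of_le_of_ne (vb.coe_nonneg) (by exact_mod_cast (Ne.symm hvb))
  have hab : (0:ℝ) < (va:ℝ) + vb := by linarith
  have hπ : (0:ℝ) < π := Real.pi_pos
  simp only [gaussianPDFReal, NNReal.coe_add, NNReal.coe_mul, NNReal.coe_div, sub_zero]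
  rw [mul_mul_mul_comm, mul_mul_mul_comm ((Real.sqrt (2 * π * ((va:ℝ) + vb)))⁻¹),
    ← Real.exp_add, ← Real.exp_add, ← mul_inv, ← mul_inv]
  congr 2
  · rw [← Real.sqrt_mul (by positivity), ← Real.sqrt_mul (by positivity)]
    congr 1
    field_simp
  · field_simp
    ring


lemma measurable_gaussianPDF_pair (vb : ℝ≥0) :
    Measurable (fun p : ℝ × ℝ => gaussianPDF p.1 vb p.2) := by
  unfold gaussianPDF gaussianPDFReal
  fun_prop

lemma map_add_of_gaussian {Ω : Type*} [MeasurableSpace Ω] {P : Measure Ω}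
    [IsProbabilityMeasure P] {A B : Ω → ℝ} (hA : Measurable A) (hB : Measurable B)
    (hAB : IndepFun A B P) {va vb : ℝ≥0}
    (hA' : P.map A = gaussianReal 0 va) (hB' : P.map B = gaussianReal 0 vb) :
    P.map (fun ω => A ω + B ω) = gaussianReal 0 (va + vb) := by
  by_cases hva : va = 0
  · subst hva
    rw [gaussianReal_zero_var] at hA'
    have h0 : A =ᵐ[P] fun _ => 0 := by
      rw [Filter.EventuallyEq, ae_iff]
      have : {ω | ¬ A ω = (fun _ => (0:ℝ)) ω} = A ⁻¹' ({0}ᶜ) := rfl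
      rw [this, ← Measure.map_apply hA (MeasurableSet.singleton (0:ℝ)).compl, hA']
      simp
    have : (fun ω => A ω + B ω) =ᵐ[P] B := by filter_upwards [h0] with ω h using by simp [h]
    rw [Measure.map_congr this, hB', zero_add]
  by_cases hvb : vb = 0
  · subst hvb
    rw [gaussianReal_zero_var] at hB'
    have h0 : B =ᵐ[P] fun _ => 0 := by
      rw [Filter.EventuallyEq, ae_iff]
      have : {ω | ¬ B ω = (fun _ => (0:ℝ)) ω} = B ⁻¹' ({0}ᶜ) := rfl
      rw [this, ← Measure.map_apply hB (MeasurableSet.singleton (0:ℝ)).compl, hB']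
      simp
    have : (fun ω => A ω + B ω) =ᵐ[P] A := by filter_upwards [h0] with ω h using by simp [h]
    rw [Measure.map_congr this, hA', add_zero]
  -- main case
  have hvab : va + vb ≠ 0 := fun h => hva (by simpa using (add_eq_zero.mp h).1)
  set vc : ℝ≥0 := va * vb / (va + vb) with hvc_def
  have hvc : vc ≠ 0 := by
    simp only [hvc_def, div_eq_mul_inv]
    exact mul_ne_zero (mul_ne_zero hva hvb) (inv_ne_zero hvab)
  have hprod : P.map (fun ω => (A ω, B ω)) = (gaussianReal 0 va).prod (gaussianReal 0 vb) := by
    rw [← hA', ← hB']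
    exact (indepFun_iff_map_prod_eq_prod_map_map hA.aemeasurable hB.aemeasurable).1 hAB
  have hmm : Measurable fun p : ℝ × ℝ => p.1 + p.2 := measurable_add
  have hmap : P.map (fun ω => A ω + B ω)
      = ((gaussianReal 0 va).prod (gaussianReal 0 vb)).map (fun p => p.1 + p.2) := by
    rw [← hprod, Measure.map_map hmm (hA.prodMk hB)]
    rfl
  rw [hmap]
  ext s hs
  rw [Measure.map_apply hmm hs, Measure.prod_apply (hmm hs)]
  -- section measure
  have key : ∀ x : ℝ, (gaussianReal 0 vb) (Prod.mk x ⁻¹' ((fun p : ℝ × ℝ => p.1 + p.2) ⁻¹' s))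
      = ∫⁻ t, s.indicator (fun t' => gaussianPDF x vb t') t := by
    intro x
    have h1 : Prod.mk x ⁻¹' ((fun p : ℝ × ℝ => p.1 + p.2) ⁻¹' s) = (fun t => x + t) ⁻¹' s := rfl
    rw [h1, ← Measure.map_apply (measurable_const_add x) hs, gaussianReal_map_const_add x,
      zero_add, gaussianReal_apply _ hvb, ← lintegral_indicator hs _]
  simp_rw [key]
  -- expand outer gaussian as density
  have hFmeas : Measurable fun p : ℝ × ℝ =>
      s.indicator (fun t' => gaussianPDF p.1 vb t') p.2 := by
    have : (fun p : ℝ × ℝ => s.indicator (fun t' => gaussianPDF p.1 vb t') p.2)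
        = (Prod.snd ⁻¹' s).indicator (fun p : ℝ × ℝ => gaussianPDF p.1 vb p.2) := by
      ext p
      by_cases hp : p.2 ∈ s <;> simp [Set.indicator_apply, hp]
    rw [this]
    exact (measurable_gaussianPDF_pair vb).indicator (measurable_snd hs)
  have hGmeas : Measurable fun x : ℝ => ∫⁻ t, s.indicator (fun t' => gaussianPDF x vb t') t := by
    exact Measurable.lintegral_prod_right hFmeas
  rw [gaussianReal_of_var_ne_zero _ hva,
    lintegral_withDensity_eq_lintegral_mul _ (measurable_gaussianPDF _ _) hGmeas]
  have hpull : ∀ x : ℝ, (gaussianPDF 0 va x * ∫⁻ t, s.indicator (fun t' => gaussianPDF x vb t') t)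
      = ∫⁻ t, s.indicator (fun t' => gaussianPDF 0 va x * gaussianPDF x vb t') t := by
    intro x
    rw [← lintegral_const_mul _ (Measurable.indicator (measurable_gaussianPDF _ _) hs)]
    congr 1 with t
    by_cases hts : t ∈ s <;> simp [Set.indicator_apply, hts]
  simp only [Pi.mul_apply]
  rw [lintegral_congr hpull]
  rw [lintegral_lintegral_swap]
  swap
  · apply Measurable.aemeasurable
    have h2 : Function.uncurry
          (fun a => s.indicator fun t' => gaussianPDF 0 va a * gaussianPDF a vb t')
        = (Prod.snd ⁻¹' s).indicator
            (fun p : ℝ × ℝ => gaussianPDF 0 va p.1 * gaussianPDF p.1 vb p.2) := by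
      ext p
      by_cases hp : p.2 ∈ s <;> simp [Function.uncurry, Set.indicator_apply, hp]
    rw [h2]
    exact (((measurable_gaussianPDF _ _).comp measurable_fst).mul
      (measurable_gaussianPDF_pair vb)).indicator (measurable_snd hs)
  -- now compute inner integral over x
  have hinner : ∀ t : ℝ, (∫⁻ x, gaussianPDF 0 va x * gaussianPDF x vb t)
      = gaussianPDF 0 (va + vb) t := by
    intro t
    have hptwise : ∀ x : ℝ, gaussianPDF 0 va x * gaussianPDF x vb t
        = gaussianPDF 0 (va + vb) t * gaussianPDF (((va : ℝ) / ((va : ℝ) + vb)) * t) vc x := by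
      intro x
      unfold gaussianPDF
      rw [← ENNReal.ofReal_mul (gaussianPDFReal_nonneg _ _ _),
        ← ENNReal.ofReal_mul (gaussianPDFReal_nonneg _ _ _),
        pdf_conv_identity va vb hva hvb x t]
    simp_rw [hptwise]
    rw [lintegral_const_mul _ (measurable_gaussianPDF _ _),
      lintegral_gaussianPDF_eq_one _ hvc, mul_one]
  calc ∫⁻ t, ∫⁻ x, s.indicator (fun t' => gaussianPDF 0 va x * gaussianPDF x vb t') t
      = ∫⁻ t, s.indicator (fun t' => gaussianPDF 0 (va + vb) t') t := by
        congr 1 with t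
        by_cases hts : t ∈ s
        · simp only [Set.indicator_of_mem hts]
          exact hinner t
        · simp [Set.indicator_of_notMem hts]
    _ = gaussianReal 0 (va + vb) s := by
        rw [lintegral_indicator hs _, ← gaussianReal_apply _ hvab]


lemma map_sum_of_gaussian {Ω : Type*} [MeasurableSpace Ω] {P : Measure Ω}
    [IsProbabilityMeasure P] {κ : Type*} [Fintype κ] {Y : κ → Ω → ℝ}
    (hmeas : ∀ i, Measurable (Y i))
    (hindep : iIndepFun Y P)
    (hdist : ∀ i, P.map (Y i) = gaussianReal 0 1) (c : κ → ℝ) (s : Finset κ) :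
    P.map (fun ω => ∑ i ∈ s, c i * Y i ω)
      = gaussianReal 0 (∑ i ∈ s, Real.toNNReal (c i ^ 2)) := by
  classical
  induction s using Finset.induction_on with
  | empty =>
      simp only [Finset.sum_empty]
      rw [Measure.map_const]
      simp
  | @insert i s hi IH =>
      have hZ : ∀ j, Measurable fun ω => c j * Y j ω := fun j => (hmeas j).const_mul _
      have hZindep : iIndepFun (fun j ω => c j * Y j ω) P := by
        have := hindep.comp (fun j (x : ℝ) => c j * x) (fun j => measurable_const_mul _)
        exact this
      have hIndep2 : IndepFun (fun ω => c i * Y i ω) (fun ω => ∑ j ∈ s, c j * Y j ω) P := by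
        have h := hZindep.indepFun_finsetSum_of_notMem hZ hi
        have hfun : (∑ j ∈ s, fun ω => c j * Y j ω) = fun ω => ∑ j ∈ s, c j * Y j ω := by
          ext ω; simp [Finset.sum_apply]
        rw [hfun] at h
        exact h.symm
      have hWdist : P.map (fun ω => c i * Y i ω) = gaussianReal 0 (Real.toNNReal (c i ^ 2)) := by
        have h1 : (fun ω => c i * Y i ω) = (fun x : ℝ => c i * x) ∘ Y i := rfl
        rw [h1, ← Measure.map_map (measurable_const_mul _) (hmeas i), hdist i,
          gaussianReal_map_const_mul, mul_zero]
        congr 1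
        ext
        simp [Real.toNNReal, max_eq_left (sq_nonneg (c i))]
      have hsum : P.map (fun ω => c i * Y i ω + ∑ j ∈ s, c j * Y j ω)
          = gaussianReal 0 (Real.toNNReal (c i ^ 2) + ∑ j ∈ s, Real.toNNReal (c j ^ 2)) :=
        map_add_of_gaussian ((hmeas i).const_mul _)
          (Finset.measurable_sum s fun j _ => hZ j) hIndep2 hWdist IH
      have hfun2 : (fun ω => ∑ j ∈ insert i s, c j * Y j ω)
          = fun ω => c i * Y i ω + ∑ j ∈ s, c j * Y j ω := by
        ext ω; rw [Finset.sum_insert hi]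
      rw [hfun2, Finset.sum_insert hi, hsum]

lemma pi_box {ι : Type*} [Fintype ι] (m : ι → Measure ℝ) [∀ i, IsProbabilityMeasure (m i)]
    (T : Finset ι) (sets : ι → Set ℝ) :
    Measure.pi m (⋂ i ∈ T, (fun x : ι → ℝ => x i) ⁻¹' sets i) = ∏ i ∈ T, m i (sets i) := by
  classical
  have hset : (⋂ i ∈ T, (fun x : ι → ℝ => x i) ⁻¹' sets i)
      = Set.pi Set.univ (fun i => if i ∈ T then sets i else Set.univ) := by
    ext x
    simp only [Set.mem_iInter, Set.mem_preimage, Set.mem_pi, Set.mem_univ, true_implies]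
    constructor
    · intro hx i
      split_ifs with hi
      · exact hx i hi
      · exact Set.mem_univ _
    · intro hx i hi
      have := hx i
      rwa [if_pos hi] at this
  rw [hset, Measure.pi_pi]
  calc ∏ i, m i (if i ∈ T then sets i else Set.univ)
      = ∏ i, (if i ∈ T then m i (sets i) else 1) := by
        refine Finset.prod_congr rfl fun i _ => ?_
        split_ifs <;> simp
    _ = ∏ i ∈ T, m i (sets i) := by
        rw [Finset.prod_ite_mem Finset.univ T (fun i => m i (sets i)), Finset.univ_inter]

lemma iIndepFun_eval {ι : Type*} [Fintype ι] (m : ι → Measure ℝ)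
    [∀ i, IsProbabilityMeasure (m i)] :
    iIndepFun (fun (i : ι) (x : ι → ℝ) => x i) (Measure.pi m) := by
  rw [iIndepFun_iff_measure_inter_preimage_eq_mul]
  intro S sets _H
  rw [pi_box m S sets]
  refine Finset.prod_congr rfl fun i _ => ?_
  simpa using (pi_box m {i} sets).symm

lemma map_eval_pi {ι : Type*} [Fintype ι] (m : ι → Measure ℝ)
    [∀ i, IsProbabilityMeasure (m i)] (i : ι) :
    (Measure.pi m).map (fun x => x i) = m i := by
  ext s hs
  rw [Measure.map_apply (measurable_pi_apply i) hs]
  have := pi_box m {i} (fun _ => s)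
  simpa using this


lemma measurable_inner_const {V : ℕ} (w : EuclideanSpace ℝ (Fin V)) :
    Measurable fun x : EuclideanSpace ℝ (Fin V) => (inner ℝ x w : ℝ) :=
  (continuous_id.inner continuous_const).measurable

lemma stdIsoGaussian_map_inner (V : ℕ) (w : EuclideanSpace ℝ (Fin V))
    (hnorm : ∑ j, w j ^ 2 = 1) :
    (stdIsoGaussian V).map (fun x => (inner ℝ x w : ℝ)) = gaussianReal 0 1 := by
  rw [stdIsoGaussian, Measure.map_map (measurable_inner_const w)
    (MeasurableEquiv.toLp 2 (Fin V → ℝ)).measurable]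
  have hcomp : ((fun x : EuclideanSpace ℝ (Fin V) => (inner ℝ x w : ℝ))
      ∘ (MeasurableEquiv.toLp 2 (Fin V → ℝ)))
      = fun x : Fin V → ℝ => ∑ j, w j * x j := by
    ext x
    simp only [Function.comp_apply, MeasurableEquiv.coe_toLp, PiLp.inner_apply, RCLike.inner_apply, conj_trivial,
      PiLp.toLp_apply]
  rw [hcomp]
  have h := map_sum_of_gaussian (P := Measure.pi fun _ : Fin V => gaussianReal 0 1)
    (Y := fun (i : Fin V) (x : Fin V → ℝ) => x i)
    (fun i => measurable_pi_apply i)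
    (iIndepFun_eval _)
    (fun i => map_eval_pi _ i) (fun j => w j) Finset.univ
  rw [h]
  congr 1
  have : ((∑ j, Real.toNNReal (w j ^ 2) : ℝ≥0) : ℝ) = 1 := by
    push_cast
    rw [← hnorm]
    exact Finset.sum_congr rfl fun j _ => Real.coe_toNNReal _ (sq_nonneg _)
  exact_mod_cast this


end RSRAux

open RSRAux

/-- Theorem 3 (Robust Type-I Error Control), with the location estimator
instantiated as the sample mean of the `K` sentinel vectors. Under the null
hypothesis the query logits `Z = X 0` and sentinel logits `S_k = X k.succ` are
independent standard isotropic Gaussians on `ℝ^V`; an attack adds an arbitrary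
drift `d` to all observed logits. With `σ_eff = √(1 + 1/K)` and `τ_α` the
`(1 − α)`-quantile of the standard normal, the standardized RSR statistic
`Z_RSR(d) = ⟪(Z + d) − (1/K)·∑ₖ (Sₖ + d), w⟫ / σ_eff` satisfies
`ℙ(Z_RSR(d) > τ_α) = α` for every `d`; in particular the false positive rate is
uniformly bounded over all drifts by `α`. -/
theorem rsr_type1_error_control
    (V K : ℕ) (hV : 1 ≤ V) (hK : 1 ≤ K) (α : ℝ) (hα : α ∈ Set.Ioo (0 : ℝ) 1)
    {Ω : Type} [MeasurableSpace Ω] (P : Measure Ω) [IsProbabilityMeasure P]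
    (X : Fin (K + 1) → Ω → EuclideanSpace ℝ (Fin V))
    (hmeas : ∀ i, Measurable (X i))
    (hindep : iIndepFun X P)
    (hdist : ∀ i, P.map (X i) = stdIsoGaussian V)
    (w : EuclideanSpace ℝ (Fin V)) (hw : ‖w‖ = 1)
    (σeff : ℝ) (hσeff : σeff = Real.sqrt (1 + 1 / K))
    (τ : ℝ) (hτ : cdf (gaussianReal 0 1) τ = 1 - α) :
    (∀ d : EuclideanSpace ℝ (Fin V),
        P {ω | (inner ℝ ((X 0 ω + d) - (K : ℝ)⁻¹ •
              ∑ k : Fin K, (X k.succ ω + d)) w : ℝ) / σeff > τ}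
          = ENNReal.ofReal α) ∧
    (⨆ d : EuclideanSpace ℝ (Fin V),
        P {ω | (inner ℝ ((X 0 ω + d) - (K : ℝ)⁻¹ •
              ∑ k : Fin K, (X k.succ ω + d)) w : ℝ) / σeff > τ})
      ≤ ENNReal.ofReal α := by
  obtain ⟨hα0, hα1⟩ := hα
  have hKpos : (0:ℝ) < (K:ℝ) := by exact_mod_cast hK
  have hKne : ((K:ℝ)) ≠ 0 := ne_of_gt hKpos
  have hσsq : σeff ^ 2 = 1 + 1 / (K:ℝ) := by
    rw [hσeff, Real.sq_sqrt (by positivity)]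
  have hσpos : 0 < σeff := by
    rw [hσeff]; exact Real.sqrt_pos.mpr (by positivity)
  have hσne : σeff ≠ 0 := ne_of_gt hσpos
  -- the projected random variables
  set T : Fin (K + 1) → Ω → ℝ := fun i ω => (inner ℝ (X i ω) w : ℝ) with hT
  have hTmeas : ∀ i, Measurable (T i) := fun i => (measurable_inner_const w).comp (hmeas i)
  have hTindep : iIndepFun T P :=
    hindep.comp (fun _ x => (inner ℝ x w : ℝ)) (fun _ => measurable_inner_const w)
  have hwsum : ∑ j, w j ^ 2 = 1 := by
    have h1 : ‖w‖ = Real.sqrt (∑ j, ‖w j‖ ^ 2) := EuclideanSpace.norm_eq w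
    have h2 : ∑ j, ‖w j‖ ^ 2 = ∑ j, w j ^ 2 :=
      Finset.sum_congr rfl fun j _ => by rw [Real.norm_eq_abs, sq_abs]
    have h3 : Real.sqrt (∑ j, w j ^ 2) = 1 := by rw [← h2, ← h1, hw]
    have h4 : (0:ℝ) ≤ ∑ j, w j ^ 2 := Finset.sum_nonneg fun j _ => sq_nonneg _
    calc ∑ j, w j ^ 2 = Real.sqrt (∑ j, w j ^ 2) ^ 2 := (Real.sq_sqrt h4).symm
      _ = 1 := by rw [h3]; norm_num
  have hTdist : ∀ i, P.map (T i) = gaussianReal 0 1 := by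
    intro i
    have h1 : T i = (fun x : EuclideanSpace ℝ (Fin V) => (inner ℝ x w : ℝ)) ∘ X i := rfl
    rw [h1, ← Measure.map_map (measurable_inner_const w) (hmeas i), hdist i]
    exact stdIsoGaussian_map_inner V w hwsum
  -- coefficients
  set a : Fin (K + 1) → ℝ := fun i => if i = 0 then σeff⁻¹ else -(σeff⁻¹ * (K:ℝ)⁻¹) with ha
  have hstat_map : P.map (fun ω => ∑ i, a i * T i ω) = gaussianReal 0 1 := by
    rw [map_sum_of_gaussian hTmeas hTindep hTdist a Finset.univ]
    congr 1
    have hsum : ∑ i, a i ^ 2 = 1 := by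
      rw [Fin.sum_univ_succ]
      simp only [ha, if_pos rfl, Fin.succ_ne_zero, if_neg, ite_false]
      rw [Finset.sum_const, Finset.card_univ, Fintype.card_fin, nsmul_eq_mul]
      have : σeff ^ 2 * (K:ℝ) = (K:ℝ) + 1 := by rw [hσsq]; field_simp
      field_simp
      nlinarith [this]
    have hcoe : ((∑ i, Real.toNNReal (a i ^ 2) : ℝ≥0) : ℝ) = 1 := by
      push_cast
      rw [← hsum]
      exact Finset.sum_congr rfl fun i _ => Real.coe_toNNReal _ (sq_nonneg _)
    exact_mod_cast hcoe
  have hstat_meas : Measurable fun ω => ∑ i, a i * T i ω :=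
    Finset.measurable_sum _ fun i _ => (hTmeas i).const_mul _
  -- pointwise identity for every drift d
  have key : ∀ (d : EuclideanSpace ℝ (Fin V)) (ω : Ω),
      (inner ℝ ((X 0 ω + d) - (K : ℝ)⁻¹ • ∑ k : Fin K, (X k.succ ω + d)) w : ℝ) / σeff
        = ∑ i, a i * T i ω := by
    intro d ω
    have hdc : ∑ k : Fin K, (X k.succ ω + d) = (∑ k : Fin K, X k.succ ω) + (K:ℝ) • d := by
      rw [Finset.sum_add_distrib, Finset.sum_const, Finset.card_univ, Fintype.card_fin,
        ← Nat.cast_smul_eq_nsmul ℝ]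
    rw [hdc, smul_add, smul_smul, inv_mul_cancel₀ hKne, one_smul]
    have hcancel : X 0 ω + d - ((K:ℝ)⁻¹ • ∑ k : Fin K, X k.succ ω + d)
        = X 0 ω - (K:ℝ)⁻¹ • ∑ k : Fin K, X k.succ ω := by abel
    rw [hcancel, inner_sub_left, real_inner_smul_left, sum_inner]
    rw [Fin.sum_univ_succ]
    simp only [ha, hT, if_pos rfl, Fin.succ_ne_zero, ite_false, if_false]
    rw [← Finset.mul_sum]
    field_simp
    ring
  -- tail probability of the standard normal
  have hIoi : gaussianReal 0 1 (Set.Ioi τ) = ENNReal.ofReal α := by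
    have hIic : gaussianReal 0 1 (Set.Iic τ) = ENNReal.ofReal (1 - α) := by
      have h1 : (gaussianReal 0 1 (Set.Iic τ)).toReal = 1 - α := by
        rw [← measureReal_def, ← cdf_eq_real]; exact hτ
      rw [← h1, ENNReal.ofReal_toReal (measure_ne_top _ _)]
    rw [← Set.compl_Iic, measure_compl measurableSet_Iic (measure_ne_top _ _), measure_univ,
      hIic, ← ENNReal.ofReal_one, ← ENNReal.ofReal_sub _ (by linarith)]
    norm_num
  have main : ∀ d : EuclideanSpace ℝ (Fin V),
      P {ω | (inner ℝ ((X 0 ω + d) - (K : ℝ)⁻¹ •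
            ∑ k : Fin K, (X k.succ ω + d)) w : ℝ) / σeff > τ}
        = ENNReal.ofReal α := by
    intro d
    have hset : {ω | (inner ℝ ((X 0 ω + d) - (K : ℝ)⁻¹ •
            ∑ k : Fin K, (X k.succ ω + d)) w : ℝ) / σeff > τ}
        = (fun ω => ∑ i, a i * T i ω) ⁻¹' Set.Ioi τ := by
      ext ω
      simp only [Set.mem_setOf_eq, Set.mem_preimage, Set.mem_Ioi, gt_iff_lt]
      rw [key d ω]
    rw [hset, ← Measure.map_apply hstat_meas measurableSet_Ioi, hstat_map, hIoi]
  exact ⟨main, iSup_le fun d => le_of_eq (main d)⟩
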